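/- arXiv:2604.20554 — 7 statements merged into one kernel-verified Lean document; each statement's English description precedes it below -/
import Mathlib

section
/- If C is an abelian category, then the set-decorated category C◁Set is abelian. -/
open CategoryTheory Limits

universe v u

/-- An object of the set-decorated category `C ◁ Set`: a triple `(c, S, f)` with `c` an
object of `C`, `S` a set, and `f : S → End c`, encoded as a function `ZFSet → End c`
vanishing outside `S` (the paper's convention that `f` evaluates to `0` outside `S`). -/
structure DecObj (C : Type u) [Category.{v} C] [Preadditive C] : Type (max u v 2) where
  c : C
  S : ZFSet.{0}
  f : ZFSet.{0} → (c ⟶ c)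
  hf : ∀ s : ZFSet.{0}, s ∉ S → f s = 0

namespace DecObj

variable {C : Type u} [Category.{v} C] [Preadditive C]

/-- `ψ : c ⟶ c'` intertwines the decorations of `X` and `Y`; by the vanishing-outside-`S`
convention this is exactly the three-case condition of the paper. -/
def Intertwines (X Y : DecObj C) (ψ : X.c ⟶ Y.c) : Prop :=
  ∀ s : ZFSet.{0}, X.f s ≫ ψ = ψ ≫ Y.f s

/-- Morphisms in `C ◁ Set`. -/
@[ext]
structure Hom (X Y : DecObj C) where
  ψ : X.c ⟶ Y.c
  comm : Intertwines X Y ψ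

instance : Category (DecObj C) where
  Hom := Hom
  id X := ⟨𝟙 X.c, fun s => by simp [Intertwines]⟩
  comp g h := ⟨g.ψ ≫ h.ψ, fun s => by
    rw [← Category.assoc, g.comm s, Category.assoc, h.comm s, Category.assoc]⟩

@[simp] theorem id_ψ (X : DecObj C) : Hom.ψ (𝟙 X) = 𝟙 X.c := rfl

@[simp] theorem comp_ψ {X Y Z : DecObj C} (g : X ⟶ Y) (h : Y ⟶ Z) :
    (g ≫ h).ψ = g.ψ ≫ h.ψ := rfl

/-- The forgetful functor `U : C ◁ Set ⥤ C`. -/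
def forgetDec (C : Type u) [Category.{v} C] [Preadditive C] : DecObj C ⥤ C where
  obj X := X.c
  map g := g.ψ

end DecObj

/-!
Kernels, cokernels and biproducts are formed on the underlying objects of `C`, with the
restricted, induced or diagonal endomorphisms. The point is that a map `l` which becomes
intertwining after composition with an intertwining monomorphism `m` is itself intertwining
(cancel `m` in `f s ≫ l ≫ m = l ≫ f s ≫ m`), and dually for epimorphisms. Hence a fork in
`C ◁ Set` is a kernel as soon as its underlying fork is a kernel in `C`, and dually. Applied to
kernels and cokernels of `C`, this gives kernels and cokernels in `C ◁ Set`, shows that monos and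
epis of `C ◁ Set` are monic and epic in `C`, and makes every mono the kernel of its cokernel (and
every epi the cokernel of its kernel), because this holds in `C`.
-/

namespace DecObj

section Preadditive

variable {C : Type u} [Category.{v} C] [Preadditive C]

@[ext]
theorem hom_ext {X Y : DecObj C} {g h : X ⟶ Y} (w : g.ψ = h.ψ) : g = h :=
  Hom.ext w

instance (X Y : DecObj C) : Zero (X ⟶ Y) := ⟨⟨0, fun _ => by simp⟩⟩

instance (X Y : DecObj C) : Add (X ⟶ Y) :=
  ⟨fun g h => ⟨g.ψ + h.ψ, fun s => by simp [g.comm s, h.comm s]⟩⟩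

instance (X Y : DecObj C) : Neg (X ⟶ Y) := ⟨fun g => ⟨-g.ψ, fun s => by simp [g.comm s]⟩⟩

instance (X Y : DecObj C) : AddCommGroup (X ⟶ Y) where
  add_assoc _ _ _ := hom_ext (add_assoc _ _ _)
  zero_add _ := hom_ext (zero_add _)
  add_zero _ := hom_ext (add_zero _)
  add_comm _ _ := hom_ext (add_comm _ _)
  neg_add_cancel _ := hom_ext (neg_add_cancel _)
  nsmul := nsmulRec
  zsmul := zsmulRec

instance : Preadditive (DecObj C) where
  add_comp _ _ _ _ _ _ := hom_ext (Preadditive.add_comp _ _ _ _ _ _)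
  comp_add _ _ _ _ _ _ := hom_ext (Preadditive.comp_add _ _ _ _ _ _)

theorem mono_of_mono_ψ {X Y : DecObj C} (g : X ⟶ Y) [Mono g.ψ] : Mono g :=
  ⟨fun _ _ h => hom_ext ((cancel_mono g.ψ).1 (congrArg Hom.ψ h))⟩

theorem epi_of_epi_ψ {X Y : DecObj C} (g : X ⟶ Y) [Epi g.ψ] : Epi g :=
  ⟨fun _ _ h => hom_ext ((cancel_epi g.ψ).1 (congrArg Hom.ψ h))⟩

theorem intertwines_of_comp_mono {X Y Z : DecObj C} {l : X.c ⟶ Y.c} (m : Y ⟶ Z) [Mono m.ψ]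
    (t : X ⟶ Z) (hl : l ≫ m.ψ = t.ψ) : Intertwines X Y l := fun s =>
  (cancel_mono m.ψ).1 (by
    rw [Category.assoc, Category.assoc, hl, t.comm s, m.comm s, ← Category.assoc, hl])

theorem intertwines_of_epi_comp {X Y Z : DecObj C} {l : Y.c ⟶ Z.c} (e : X ⟶ Y) [Epi e.ψ]
    (t : X ⟶ Z) (hl : e.ψ ≫ l = t.ψ) : Intertwines Y Z l := fun s =>
  (cancel_epi e.ψ).1 (by
    rw [← Category.assoc, ← Category.assoc, ← e.comm s, Category.assoc, hl, t.comm s, ← hl,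
      Category.assoc])

noncomputable def isLimitKernelForkOfψ {X Y K : DecObj C} {g : X ⟶ Y} (ι : K ⟶ X)
    (w : ι ≫ g = 0) (h : IsLimit (KernelFork.ofι ι.ψ (congrArg Hom.ψ w))) :
    IsLimit (KernelFork.ofι ι w) :=
  have : Mono ι.ψ := Fork.IsLimit.mono h
  have : Mono ι := mono_of_mono_ψ ι
  KernelFork.IsLimit.ofι' ι w fun t ht =>
    let l := KernelFork.IsLimit.lift' h t.ψ (congrArg Hom.ψ ht)
    have hl : l.1 ≫ ι.ψ = t.ψ := l.2
    ⟨⟨l.1, intertwines_of_comp_mono ι t hl⟩, hom_ext hl⟩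

noncomputable def isColimitCokernelCoforkOfψ {X Y Q : DecObj C} {g : X ⟶ Y} (π : Y ⟶ Q)
    (w : g ≫ π = 0) (h : IsColimit (CokernelCofork.ofπ π.ψ (congrArg Hom.ψ w))) :
    IsColimit (CokernelCofork.ofπ π w) :=
  have : Epi π.ψ := Cofork.IsColimit.epi h
  have : Epi π := epi_of_epi_ψ π
  CokernelCofork.IsColimit.ofπ' π w fun t ht =>
    let l := CokernelCofork.IsColimit.desc' h t.ψ (congrArg Hom.ψ ht)
    have hl : π.ψ ≫ l.1 = t.ψ := l.2
    ⟨⟨l.1, intertwines_of_epi_comp π t hl⟩, hom_ext hl⟩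

open ZeroObject in
instance [HasZeroObject C] : HasZeroObject (DecObj C) :=
  ⟨⟨⟨0, ∅, 0, fun _ _ => rfl⟩,
    (IsZero.iff_id_eq_zero _).2 (hom_ext ((isZero_zero C).eq_of_src _ _))⟩⟩

noncomputable def biprodObj [HasBinaryBiproducts C] (X Y : DecObj C) : DecObj C where
  c := X.c ⊞ Y.c
  S := X.S ∪ Y.S
  f s := biprod.map (X.f s) (Y.f s)
  hf s hs := by
    rw [ZFSet.mem_union, not_or] at hs
    rw [X.hf s hs.1, Y.hf s hs.2]
    ext <;> simp

noncomputable def biprodBicone [HasBinaryBiproducts C] (X Y : DecObj C) : BinaryBicone X Y where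
  pt := biprodObj X Y
  fst := ⟨biprod.fst, fun _ => biprod.map_fst _ _⟩
  snd := ⟨biprod.snd, fun _ => biprod.map_snd _ _⟩
  inl := ⟨biprod.inl, fun _ => (biprod.inl_map _ _).symm⟩
  inr := ⟨biprod.inr, fun _ => (biprod.inr_map _ _).symm⟩
  inl_fst := hom_ext biprod.inl_fst
  inl_snd := hom_ext biprod.inl_snd
  inr_fst := hom_ext biprod.inr_fst
  inr_snd := hom_ext biprod.inr_snd

instance [HasBinaryBiproducts C] : HasBinaryBiproducts (DecObj C) :=
  ⟨fun X Y => hasBinaryBiproduct_of_total (biprodBicone X Y) (hom_ext biprod.total)⟩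

instance [HasZeroObject C] [HasBinaryBiproducts C] : HasFiniteProducts (DecObj C) :=
  hasFiniteProducts_of_has_binary_and_terminal

noncomputable def kernelObj [HasKernels C] {X Y : DecObj C} (g : X ⟶ Y) : DecObj C where
  c := kernel g.ψ
  S := X.S
  f s := kernel.lift g.ψ (kernel.ι g.ψ ≫ X.f s) (by simp [g.comm s])
  hf s hs := by ext; simp [X.hf s hs]

noncomputable def kernelι [HasKernels C] {X Y : DecObj C} (g : X ⟶ Y) : kernelObj g ⟶ X :=
  ⟨kernel.ι g.ψ, fun _ => kernel.lift_ι _ _ _⟩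

theorem kernelι_comp [HasKernels C] {X Y : DecObj C} (g : X ⟶ Y) : kernelι g ≫ g = 0 :=
  hom_ext (kernel.condition g.ψ)

noncomputable def cokernelObj [HasCokernels C] {X Y : DecObj C} (g : X ⟶ Y) : DecObj C where
  c := cokernel g.ψ
  S := Y.S
  f s := cokernel.desc g.ψ (Y.f s ≫ cokernel.π g.ψ) (by
    rw [← Category.assoc, ← g.comm s, Category.assoc, cokernel.condition, comp_zero])
  hf s hs := by ext; simp [Y.hf s hs]

noncomputable def cokernelπ [HasCokernels C] {X Y : DecObj C} (g : X ⟶ Y) : Y ⟶ cokernelObj g :=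
  ⟨cokernel.π g.ψ, fun _ => (cokernel.π_desc _ _ _).symm⟩

theorem comp_cokernelπ [HasCokernels C] {X Y : DecObj C} (g : X ⟶ Y) : g ≫ cokernelπ g = 0 :=
  hom_ext (cokernel.condition g.ψ)

instance [HasKernels C] : HasKernels (DecObj C) :=
  ⟨fun g => HasLimit.mk ⟨_, isLimitKernelForkOfψ _ (kernelι_comp g) (kernelIsKernel g.ψ)⟩⟩

instance [HasCokernels C] : HasCokernels (DecObj C) :=
  ⟨fun g => HasColimit.mk
    ⟨_, isColimitCokernelCoforkOfψ _ (comp_cokernelπ g) (cokernelIsCokernel g.ψ)⟩⟩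

theorem mono_ψ [HasKernels C] {X Y : DecObj C} (g : X ⟶ Y) [Mono g] : Mono g.ψ :=
  Preadditive.mono_of_kernel_zero
    (congrArg Hom.ψ (zero_of_comp_mono g (kernelι_comp g)) : kernel.ι g.ψ = 0)

theorem epi_ψ [HasCokernels C] {X Y : DecObj C} (g : X ⟶ Y) [Epi g] : Epi g.ψ :=
  Preadditive.epi_of_cokernel_zero
    (congrArg Hom.ψ (zero_of_epi_comp g (comp_cokernelπ g)) : cokernel.π g.ψ = 0)

end Preadditive

section Abelian

variable {C : Type u} [Category.{v} C] [Abelian C]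

instance : IsNormalMonoCategory (DecObj C) where
  normalMonoOfMono g _ :=
    have := mono_ψ g
    ⟨{ Z := cokernelObj g
       g := cokernelπ g
       w := comp_cokernelπ g
       isLimit := isLimitKernelForkOfψ g _
        (Abelian.monoIsKernelOfCokernel (CokernelCofork.ofπ _ (cokernel.condition g.ψ))
          (cokernelIsCokernel g.ψ)) }⟩

instance : IsNormalEpiCategory (DecObj C) where
  normalEpiOfEpi g _ :=
    have := epi_ψ g
    ⟨{ W := kernelObj g
       g := kernelι g
       w := kernelι_comp g
       isColimit := isColimitCokernelCoforkOfψ g _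
        (Abelian.epiIsCokernelOfKernel (KernelFork.ofι _ (kernel.condition g.ψ))
          (kernelIsKernel g.ψ)) }⟩

end Abelian

end DecObj

/-- if `C` is abelian then the set-decorated category `C ◁ Set` is abelian. -/
theorem decoration_abelian (C : Type u) [Category.{v} C] [Abelian C] :
    Nonempty (Abelian (DecObj C)) :=
  ⟨{ normalMonoOfMono := IsNormalMonoCategory.normalMonoOfMono
     normalEpiOfEpi := IsNormalEpiCategory.normalEpiOfEpi }⟩
end

section
/- Let C be an additive category with a zero object, I a set, and suppose the product of objects (c_i, ∅, ∅) exists in C◁Set for a family of objects c_i of C indexed by I. Then the product of the c_i exists in C. -/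
open CategoryTheory Limits

universe v u

/-- The object `(c, ∅, ∅)` of `C ◁ Set` with empty decoration. -/
def DecObj.emptyDec {C : Type u} [Category.{v} C] [Preadditive C] (x : C) : DecObj C :=
  ⟨x, ∅, fun _ => 0, fun _ _ => rfl⟩

/-! The projections of `P = ∏ (cᵢ, ∅, ∅)` already form a product in `C`. Lifts come from
undecorated cones, which map into `P`. For uniqueness it suffices that the projections are
jointly monic: given `d : x ⟶ P` killed by all of them, decorate `x ⊞ P` by `P`'s decoration
plus the nilpotent endomorphism `fst ≫ d ≫ inr` at a fresh index. The lift `w` of the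
projections `snd ≫ πᵢ` is a retraction of `inr`, and intertwining at the fresh index forces
`d ≫ inr ≫ w = 0`, i.e. `d = 0`. -/

namespace DecObj

variable {C : Type u} [Category.{v} C] [Preadditive C]

def emptyDecMap {x y : C} (g : x ⟶ y) : emptyDec x ⟶ emptyDec y :=
  ⟨g, fun _ => by simp [emptyDec]⟩

section Adjoin

variable [HasBinaryBiproducts C]

open scoped Classical in
noncomputable def adjoin (Y : DecObj C) {x : C} (d : x ⟶ Y.c) (t : ZFSet.{0}) : DecObj C where
  c := x ⊞ Y.c
  S := insert t Y.S
  f s := if s = t then biprod.fst ≫ d ≫ biprod.inr else biprod.snd ≫ Y.f s ≫ biprod.inr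
  hf s hs := by
    rw [ZFSet.mem_insert_iff, not_or] at hs
    simp [hs.1, Y.hf s hs.2]

variable (Y : DecObj C) {x : C} (d : x ⟶ Y.c) {t : ZFSet.{0}}

noncomputable def inrAdjoin (ht : t ∉ Y.S) : Y ⟶ adjoin Y d t :=
  ⟨biprod.inr, fun s => by
    dsimp only [adjoin]
    split_ifs with hs
    · simp [hs, Y.hf t ht]
    · simp⟩

variable {Y d}

noncomputable def sndAdjoin {Z : DecObj C} (g : Y ⟶ Z) (hd : d ≫ g.ψ = 0) (ht : t ∉ Z.S) :
    adjoin Y d t ⟶ Z :=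
  ⟨biprod.snd ≫ g.ψ, fun s => by
    dsimp only [adjoin]
    split_ifs with hs
    · simp [hs, hd, Z.hf t ht]
    · simp [g.comm s]⟩

theorem comp_inr_comp_eq_zero {Z : DecObj C} (w : adjoin Y d t ⟶ Z) (ht : t ∉ Z.S) :
    d ≫ biprod.inr ≫ w.ψ = 0 := by
  have h := congrArg (biprod.inl ≫ ·) (w.comm t)
  dsimp only [adjoin] at h
  simpa [Z.hf t ht] using h

end Adjoin

variable {I : Type*} (c : I → C) [HasProduct fun i => emptyDec (c i)]

noncomputable def forgetPiπ (i : I) : (∏ᶜ fun i => emptyDec (c i)).c ⟶ c i :=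
  (Pi.π (fun i => emptyDec (c i)) i).ψ

noncomputable def forgetPiLift {x : C} (g : ∀ i, x ⟶ c i) :
    x ⟶ (∏ᶜ fun i => emptyDec (c i)).c :=
  (Pi.lift fun i => emptyDecMap (g i)).ψ

@[simp] theorem forgetPiLift_forgetPiπ {x : C} (g : ∀ i, x ⟶ c i) (i : I) :
    forgetPiLift c g ≫ forgetPiπ c i = g i :=
  congrArg Hom.ψ (Pi.lift_π (fun i => emptyDecMap (g i)) i)

variable [HasBinaryBiproducts C]

theorem eq_zero_of_comp_forgetPiπ {x : C} (d : x ⟶ (∏ᶜ fun i => emptyDec (c i)).c)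
    (hd : ∀ i, d ≫ forgetPiπ c i = 0) : d = 0 := by
  let P := ∏ᶜ fun i => emptyDec (c i)
  have ht : P.S ∉ P.S := ZFSet.mem_irrefl _
  let w : adjoin P d P.S ⟶ P :=
    Pi.lift fun i => sndAdjoin (Pi.π _ i) (hd i) (ZFSet.notMem_empty _)
  have hretract : inrAdjoin P d ht ≫ w = 𝟙 P :=
    Pi.hom_ext _ _ fun i => Hom.ext <| by
      rw [Category.assoc, Pi.lift_π, Category.id_comp]
      exact biprod.inr_snd_assoc (X := x) _
  calc d = d ≫ (inrAdjoin P d ht ≫ w).ψ := by rw [hretract, id_ψ, Category.comp_id]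
    _ = 0 := comp_inr_comp_eq_zero w ht

noncomputable def isLimitForgetPiFan :
    IsLimit (Fan.mk (∏ᶜ fun i => emptyDec (c i)).c (forgetPiπ c)) :=
  Fan.IsLimit.mk _ (fun s => forgetPiLift c s.proj) (fun s => forgetPiLift_forgetPiπ c s.proj)
    fun s m hm => sub_eq_zero.mp <| eq_zero_of_comp_forgetPiπ c _ fun i => by
      rw [Preadditive.sub_comp, sub_eq_zero, forgetPiLift_forgetPiπ]
      exact hm i

end DecObj

theorem product_reflected_general (C : Type u) [Category.{v} C] [Preadditive C]
    [HasFiniteBiproducts C] (I : Type v) (c : I → C)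
    [HasProduct (fun i : I => DecObj.emptyDec (c i))] :
    HasProduct c :=
  have : HasBinaryBiproducts C := hasBinaryBiproducts_of_finite_biproducts C
  HasLimit.mk ⟨_, DecObj.isLimitForgetPiFan c⟩

/-- if the product of the objects `(cᵢ, ∅, ∅)` exists in `C ◁ Set`, then the
product of the `cᵢ` exists in `C` (the forgetful functor reflects existence of products). -/
theorem product_reflected (C : Type u) [Category.{v} C] [Preadditive C]
    [HasZeroObject C] [HasFiniteBiproducts C] (I : Type v) (c : I → C)
    [HasProduct (fun i : I => DecObj.emptyDec (c i))] :
    HasProduct c :=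
  product_reflected_general C I c
end

section
/- Let C be an abelian category and (c, S, f) an object of C◁Set. Set S' = S ⊔ {s₀} (disjoint union) and define f' : S' → End(c ⊕ c) by f'(s) = f(s) ⊕ f(s) for s ∈ S (so f' restricted to S acts diagonally via f), and f'(s₀) = [[0, id],[0, 0]]. Then the inclusion of c as the first summand gives a monomorphism (c,S,f) → (c ⊕ c, S', f') in C◁Set which is an essential extension: every nonzero subobject of (c ⊕ c, S', f') has nonzero intersection with the image of (c,S,f). -/
open CategoryTheory Limits

universe v u

/-- `m : X ⟶ Y` is an essential monomorphism: it is monic and every nonzero subobject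
`g : Z ⟶ Y` meets the image of `m` nontrivially, i.e. there is a nonzero `W` mapping
monically into `Z` whose composite into `Y` factors through `m`. -/
def IsEssentialMono {A : Type*} [Category A] {X Y : A} (m : X ⟶ Y) : Prop :=
  Mono m ∧ ∀ (Z : A) (g : Z ⟶ Y), Mono g → ¬ IsZero Z →
    ∃ (W : A) (u : W ⟶ Z) (v : W ⟶ X), Mono u ∧ ¬ IsZero W ∧ u ≫ g = v ≫ m

variable {C : Type u} [Category.{v} C] [Abelian C]

open Classical in
/-- The decorated object `(c ⊞ c, S ⊔ {s₀}, f')`, where `f'` acts diagonally via `f` on `S`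
and `f' s₀` is the matrix `[[0, id], [0, 0]]` (mapping the second summand onto the first). -/
noncomputable def DecObj.doubled (X : DecObj C) (s₀ : ZFSet.{0}) (hs₀ : s₀ ∉ X.S) :
    DecObj C where
  c := X.c ⊞ X.c
  S := insert s₀ X.S
  f s := if s = s₀ then biprod.snd ≫ biprod.inl else biprod.map (X.f s) (X.f s)
  hf s hs := by
    have h1 : s ≠ s₀ := fun h => hs (by rw [h]; exact ZFSet.mem_insert _ _)
    have h2 : s ∉ X.S := fun h => hs (ZFSet.mem_insert_of_mem _ h)
    simp only [if_neg h1, X.hf s h2]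
    apply biprod.hom_ext <;> simp

/-- The inclusion of `(c,S,f)` as the first summand of its doubling. -/
noncomputable def DecObj.doubledIncl (X : DecObj C) (s₀ : ZFSet.{0}) (hs₀ : s₀ ∉ X.S) :
    X ⟶ X.doubled s₀ hs₀ where
  ψ := biprod.inl
  comm s := by
    dsimp [DecObj.doubled]
    by_cases h : s = s₀
    · subst h
      rw [if_pos rfl, X.hf s hs₀]
      simp
    · rw [if_neg h]
      simp


section Aux

variable {C : Type u} [Category.{v} C] [Abelian C]

/-- If the underlying morphism is mono, the decorated morphism is mono. -/
lemma decMono_of_mono {X Y : DecObj C} (g : X ⟶ Y) (h : Mono g.ψ) : Mono g := by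
  constructor
  intro Z u v huv
  apply DecObj.Hom.ext
  have := congrArg DecObj.Hom.ψ huv
  simp only [DecObj.comp_ψ] at this
  exact (cancel_mono g.ψ).mp this

/-- The zero morphism between decorated objects. -/
def decZeroHom (X Y : DecObj C) : X ⟶ Y :=
  ⟨0, fun s => by simp⟩

lemma isZero_c_of_isZero {X : DecObj C} (h : IsZero X) : IsZero X.c := by
  have h1 : (𝟙 X : X ⟶ X) = decZeroHom X X := h.eq_of_src _ _
  have h2 : 𝟙 X.c = 0 := congrArg DecObj.Hom.ψ h1
  exact (IsZero.iff_id_eq_zero X.c).mpr h2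

lemma isZero_of_isZero_c {X : DecObj C} (h : IsZero X.c) : IsZero X := by
  constructor
  · intro Y
    refine ⟨⟨⟨decZeroHom X Y⟩, fun g => ?_⟩⟩
    apply DecObj.Hom.ext
    exact h.eq_of_src _ _
  · intro Y
    refine ⟨⟨⟨decZeroHom Y X⟩, fun g => ?_⟩⟩
    apply DecObj.Hom.ext
    exact h.eq_of_tgt _ _

end Aux

/-- the inclusion of `(c,S,f)` as the first summand of
`(c ⊞ c, S ⊔ {s₀}, f')` is an essential monomorphism in `C ◁ Set`: every nonzero
subobject of the doubling has nonzero intersection with the image of `(c,S,f)`. -/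
theorem doubledIncl_essential_mono (X : DecObj C) (s₀ : ZFSet.{0}) (hs₀ : s₀ ∉ X.S) :
    IsEssentialMono (X.doubledIncl s₀ hs₀) := by
  constructor
  · exact decMono_of_mono _ (by dsimp [DecObj.doubledIncl]; exact (inferInstance : Mono (biprod.inl : X.c ⟶ X.c ⊞ X.c)))
  · intro Z g hg hZ
    classical
    set p : Z.c ⟶ X.c := g.ψ ≫ biprod.snd with hp
    have hfs0 : (X.doubled s₀ hs₀).f s₀ = biprod.snd ≫ biprod.inl := by
      simp [DecObj.doubled]
    have hfs : ∀ s, s ≠ s₀ → (X.doubled s₀ hs₀).f s = biprod.map (X.f s) (X.f s) := by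
      intro s hs; simp [DecObj.doubled, hs]
    have key : Z.f s₀ ≫ g.ψ = p ≫ biprod.inl := by
      have := g.comm s₀
      rw [hfs0] at this
      erw [this, hp, Category.assoc]
      rfl
    have hzp : Z.f s₀ ≫ p = 0 := by
      erw [hp, ← Category.assoc, key, Category.assoc]
      erw [biprod.inl_snd, comp_zero]
    have hcp : ∀ s, s ≠ s₀ → Z.f s ≫ p = p ≫ X.f s := by
      intro s h
      erw [hp, ← Category.assoc, g.comm s, hfs s h, Category.assoc, Category.assoc]
      erw [biprod.map_snd]
      rfl
    have hker : ∀ s, (kernel.ι p ≫ Z.f s) ≫ p = 0 := by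
      intro s
      by_cases h : s = s₀
      · rw [h, Category.assoc, hzp, comp_zero]
      · rw [Category.assoc, hcp s h, ← Category.assoc, kernel.condition, zero_comp]
    let W : DecObj C :=
      { c := kernel p
        S := Z.S
        f := fun s => kernel.lift p (kernel.ι p ≫ Z.f s) (hker s)
        hf := fun s hs => by
          have h0 : Z.f s = 0 := Z.hf s hs
          rw [← cancel_mono (kernel.ι p), kernel.lift_ι, h0, comp_zero, zero_comp] }
    have hWc : ¬ IsZero W.c := by
      intro hzero
      have hki : kernel.ι p = 0 := hzero.eq_of_src _ _
      have hpm : Mono p := Abelian.mono_of_kernel_ι_eq_zero p hki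
      have hzf : Z.f s₀ = (0 : Z.c ⟶ Z.c) := by
        rw [← cancel_mono p, hzp, zero_comp]
      have hp0 : p = 0 := by
        have h1 : p ≫ (biprod.inl : X.c ⟶ X.c ⊞ X.c) = 0 := by
          rw [← key, hzf, zero_comp]
          rfl
        rwa [← cancel_mono (biprod.inl : X.c ⟶ X.c ⊞ X.c), zero_comp]
      have : IsZero Z.c := by
        rw [IsZero.iff_id_eq_zero, ← cancel_mono p, hp0, comp_zero, zero_comp]
      exact hZ (isZero_of_isZero_c this)
    refine ⟨W, ⟨kernel.ι p, fun s => kernel.lift_ι _ _ _⟩,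
      ⟨kernel.ι p ≫ g.ψ ≫ biprod.fst, fun s => ?_⟩,
      decMono_of_mono _ (by dsimp; infer_instance), fun h => hWc (isZero_c_of_isZero h),
      ?_⟩
    · -- intertwining for v
      show kernel.lift p (kernel.ι p ≫ Z.f s) (hker s) ≫ (kernel.ι p ≫ g.ψ ≫ biprod.fst)
          = (kernel.ι p ≫ g.ψ ≫ biprod.fst) ≫ X.f s
      rw [← Category.assoc, kernel.lift_ι]
      by_cases h : s = s₀
      · have h2 : Z.f s₀ ≫ g.ψ ≫ biprod.fst = p := by
          erw [← Category.assoc, key, Category.assoc]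
          erw [biprod.inl_fst, Category.comp_id]
        rw [h, Category.assoc, h2, kernel.condition, X.hf s₀ hs₀, comp_zero]
      · have hc2 : Z.f s ≫ g.ψ ≫ biprod.fst = (g.ψ ≫ biprod.fst) ≫ X.f s := by
          erw [← Category.assoc, g.comm s, hfs s h, Category.assoc, Category.assoc]
          erw [biprod.map_fst]
          rfl
        rw [Category.assoc, hc2]
        simp
    · -- u ≫ g = v ≫ m
      apply DecObj.Hom.ext
      show kernel.ι p ≫ g.ψ = (kernel.ι p ≫ g.ψ ≫ biprod.fst) ≫ biprod.inl
      apply biprod.hom_ext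
      · simp
        exact Category.assoc _ _ _
      · simp only [Category.assoc, biprod.inl_snd, comp_zero]
        erw [Category.assoc, ← hp, kernel.condition]
end

section
/- Let C be an abelian category with a nonzero object. Then C◁Set has no nonzero injective objects: if (c,S,f) is injective in C◁Set then c ≅ 0. -/
open CategoryTheory Limits

universe v u

/-- if `C` is an abelian category with a nonzero object, then `C ◁ Set` has
no nonzero injective objects: any injective `(c,S,f)` has `c ≅ 0`. -/
theorem no_nonzero_injectives (C : Type u) [Category.{v} C] [Abelian C]
    (hC : ∃ c : C, ¬ IsZero c) (X : DecObj C) (hX : Injective X) :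
    IsZero X.c := by
  classical
  set s₀ : ZFSet.{0} := X.S with hs₀
  have hs₀mem : s₀ ∉ X.S := ZFSet.mem_irrefl _
  -- the essential extension
  let Y : DecObj C :=
    { c := X.c ⊞ X.c
      S := insert s₀ X.S
      f := fun s => if s = s₀ then biprod.snd ≫ biprod.inl
        else biprod.map (X.f s) (X.f s)
      hf := by
        intro s hs
        rw [ZFSet.mem_insert_iff] at hs
        push_neg at hs
        show (if s = s₀ then biprod.snd ≫ biprod.inl
          else biprod.map (X.f s) (X.f s)) = 0
        rw [if_neg hs.1, X.hf s hs.2]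
        apply biprod.hom_ext <;> simp }
  let i : X ⟶ Y :=
    { ψ := biprod.inl
      comm := by
        intro s
        by_cases h : s = s₀
        · subst h
          rw [X.hf _ hs₀mem]
          show 0 ≫ _ = biprod.inl ≫ (if s₀ = s₀ then biprod.snd ≫ biprod.inl
            else biprod.map (X.f s₀) (X.f s₀))
          rw [if_pos rfl]
          simp
        · show X.f s ≫ biprod.inl = biprod.inl ≫ (if s = s₀ then _ else
            biprod.map (X.f s) (X.f s))
          rw [if_neg h]
          simp }
  have imono : Mono i := by
    constructor
    intro Z a b hab
    apply DecObj.Hom.ext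
    have : a.ψ ≫ biprod.inl = b.ψ ≫ biprod.inl := congrArg DecObj.Hom.ψ hab
    exact (cancel_mono biprod.inl).mp this
  obtain ⟨r, hr⟩ := hX.factors (𝟙 X) i
  have hrψ : biprod.inl ≫ r.ψ = 𝟙 X.c := congrArg DecObj.Hom.ψ hr
  have hc := r.comm s₀
  have hY : Y.f s₀ = biprod.snd ≫ biprod.inl := if_pos rfl
  rw [hY, X.hf _ hs₀mem, comp_zero, Category.assoc, hrψ, Category.comp_id] at hc
  have : (𝟙 X.c : X.c ⟶ X.c) = 0 := by
    have := biprod.inr ≫= hc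
    simpa using this
  refine IsZero.of_iso (isZero_zero C) ?_
  exact { hom := 0, inv := 0,
          hom_inv_id := by rw [this]; simp,
          inv_hom_id := by simp }
end

section
/- The forgetful functor U : Ab◁Set → Ab is cocontinuous but has no left adjoint and no right adjoint. -/
/-!
Colimits in `C ◁ Set` are computed in `C`: take the colimit of the underlying diagram and
decorate it at `s` by the endomorphism induced by the decorations at `s`, with the union of the
supports as support. Adjoints fail for a set-theoretic reason: every object `X` has a point
`s₀ ∉ X.S` (for instance `X.S` itself), and a morphism between `X` and `c` decorated by `𝟙 c` at
`s₀` alone must have zero underlying map. An adjoint of `U` would then identify `c ⟶ c` with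
such a subsingleton hom-set, so `c` would be zero; `ℤ` is not.
-/

open CategoryTheory Limits

universe v u

namespace DecObj

variable {C : Type u} [Category.{v} C] [Preadditive C]

section Colimits

variable {J : Type*} [Category J] [Small.{0} J] (K : J ⥤ DecObj C)

@[simps]
def decorationEnd (s : ZFSet.{0}) : K ⋙ forgetDec C ⟶ K ⋙ forgetDec C where
  app j := (K.obj j).f s
  naturality _ _ α := ((K.map α).comm s).symm

noncomputable def supportUnion : ZFSet.{0} :=
  ZFSet.sUnion (ZFSet.range fun j => (K.obj j).S)

lemma mem_supportUnion {j : J} {s : ZFSet.{0}} (hs : s ∈ (K.obj j).S) : s ∈ supportUnion K :=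
  ZFSet.mem_sUnion_of_mem hs (ZFSet.mem_range_self j)

variable [HasColimit (K ⋙ forgetDec C)]

noncomputable def colimitObj : DecObj C where
  c := colimit (K ⋙ forgetDec C)
  S := supportUnion K
  f s := colimMap (decorationEnd K s)
  hf s hs := colimit.hom_ext fun j => by
    rw [ι_colimMap, decorationEnd_app, (K.obj j).hf s fun h => hs (mem_supportUnion K h),
      comp_zero]
    exact zero_comp

noncomputable def colimitCocone : Cocone K where
  pt := colimitObj K
  ι.app j := ⟨colimit.ι (K ⋙ forgetDec C) j, fun s => (ι_colimMap (decorationEnd K s) j).symm⟩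
  ι.naturality _ _ α := Hom.ext ((colimit.w (K ⋙ forgetDec C) α).trans (Category.comp_id _).symm)

noncomputable def isColimitColimitCocone : IsColimit (colimitCocone K) where
  desc t := ⟨colimit.desc _ ((forgetDec C).mapCocone t), fun s => colimit.hom_ext fun j => by
    erw [ι_colimMap_assoc, colimit.ι_desc, colimit.ι_desc_assoc]
    exact (t.ι.app j).comm s⟩
  fac t j := Hom.ext (colimit.ι_desc _ j)
  uniq t m hm := Hom.ext (colimit.hom_ext fun j =>
    (congrArg Hom.ψ (hm j)).trans (colimit.ι_desc ((forgetDec C).mapCocone t) j).symm)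

noncomputable def isColimitMapCoconeColimitCocone :
    IsColimit ((forgetDec C).mapCocone (colimitCocone K)) :=
  (colimit.isColimit _).ofIsoColimit (Cocone.ext (Iso.refl _) fun _ => Category.comp_id _)

instance preservesColimit_forgetDec : PreservesColimit K (forgetDec C) :=
  preservesColimit_of_preserves_colimit_cocone (isColimitColimitCocone K)
    (isColimitMapCoconeColimitCocone K)

end Colimits

section Single

variable (c : C) (s₀ : ZFSet.{0})

open scoped Classical in
noncomputable def single : DecObj C where
  c := c
  S := {s₀}
  f s := if s = s₀ then 𝟙 c else 0
  hf _ hs := if_neg (by simpa using hs)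

@[simp] lemma single_f_self : (single c s₀).f s₀ = 𝟙 _ := if_pos rfl

variable {c s₀} {X : DecObj C}

lemma subsingleton_hom_single (hs : s₀ ∉ X.S) : Subsingleton (X ⟶ single c s₀) := by
  have hψ (g : X ⟶ single c s₀) : g.ψ = 0 := by
    have h := g.comm s₀
    rwa [X.hf s₀ hs, zero_comp, single_f_self, Category.comp_id, eq_comm] at h
  exact ⟨fun g h => Hom.ext ((hψ g).trans (hψ h).symm)⟩

lemma subsingleton_single_hom (hs : s₀ ∉ X.S) : Subsingleton (single c s₀ ⟶ X) := by
  have hψ (g : single c s₀ ⟶ X) : g.ψ = 0 := by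
    have h := g.comm s₀
    rwa [X.hf s₀ hs, comp_zero, single_f_self, Category.id_comp] at h
  exact ⟨fun g h => Hom.ext ((hψ g).trans (hψ h).symm)⟩

end Single

lemma not_isRightAdjoint_forgetDec {c : C} (hc : ¬ IsZero c) :
    ¬ (forgetDec C).IsRightAdjoint := by
  rintro ⟨L, ⟨adj⟩⟩
  have := subsingleton_hom_single (c := c) (ZFSet.mem_irrefl (L.obj c).S)
  have : Subsingleton (c ⟶ c) := (adj.homEquiv c (single c (L.obj c).S)).symm.subsingleton
  exact hc ((IsZero.iff_id_eq_zero c).2 (Subsingleton.elim _ _))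

lemma not_isLeftAdjoint_forgetDec {c : C} (hc : ¬ IsZero c) :
    ¬ (forgetDec C).IsLeftAdjoint := by
  rintro ⟨R, ⟨adj⟩⟩
  have := subsingleton_single_hom (c := c) (ZFSet.mem_irrefl (R.obj c).S)
  have : Subsingleton (c ⟶ c) := (adj.homEquiv (single c (R.obj c).S) c).subsingleton
  exact hc ((IsZero.iff_id_eq_zero c).2 (Subsingleton.elim _ _))

end DecObj

/-- the forgetful functor `U : Ab ◁ Set ⥤ Ab` is cocontinuous but has
neither a left adjoint nor a right adjoint. -/
theorem forgetDec_Ab_cocontinuous_no_adjoints :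
    PreservesColimits (DecObj.forgetDec AddCommGrpCat.{0}) ∧
    ¬ (DecObj.forgetDec AddCommGrpCat.{0}).IsRightAdjoint ∧
    ¬ (DecObj.forgetDec AddCommGrpCat.{0}).IsLeftAdjoint := by
  have hℤ : ¬ IsZero (AddCommGrpCat.of ℤ) :=
    AddCommGrpCat.isZero_of_iff_subsingleton.not.2 (not_subsingleton ℤ)
  exact ⟨⟨⟨inferInstance⟩⟩, DecObj.not_isRightAdjoint_forgetDec hℤ,
    DecObj.not_isLeftAdjoint_forgetDec hℤ⟩
end

section
/- Let (k_β)_{β < λ} be a chain of fields indexed by ordinals below a regular cardinal λ with k_β ⊆ k_{β'} of infinite degree for β < β', and let (V_β, ν) be a 0-grounded system: each V_β a k_β-vector space, k-linear transitions ν_{β'β}, with V_β = k_β · ν_{β0}(V_0) for all β. If dim_{k_0} V_0 < λ, then there exists α < λ such that ν_{β'β} is injective for all α ≤ β ≤ β' < λ (the system is 'trim'). -/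
/-!
Fix a basis `(b_i)_{i ∈ ι}` of `V_0`; its images `ν_{β0}(b_i)` generate `V_β` over `k_β`. The
`k_β`-linear relations among these generators, with scalars extended to the ambient field `K`,
span a subspace `W_β` of `K^(ι)` that grows with `β`. Extending scalars creates no new
`k_β`-relations, so `ν_{γβ}` is injective as soon as `W_γ = W_β`. Finally a monotone chain of
subspaces of `K^(ι)`, indexed by `λ`, stabilises below `λ`: a basis of its union has
`≤ dim_{k_0} V_0 < λ` elements, each appearing at some stage, and `λ` is regular.
-/

open Cardinal

universe u

theorem Finsupp.mem_of_mapRange_algebraMap_mem_span {k K ι : Type*} [Field k] [Field K]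
    [Algebra k K] (N : Submodule k (ι →₀ k)) {g : ι →₀ k}
    (hg : Finsupp.mapRange (algebraMap k K) (map_zero _) g ∈
      Submodule.span K (Finsupp.mapRange (algebraMap k K) (map_zero _) '' N)) :
    g ∈ N := by
  by_contra hgN
  obtain ⟨f, hfg, hfN⟩ := Submodule.exists_dual_map_eq_bot_of_notMem hgN inferInstance
  -- `F` extends `f` to `ι →₀ K`: it kills the `K`-span of `N` but not `g`
  let F : (ι →₀ K) →ₗ[K] K :=
    Finsupp.linearCombination K fun i => algebraMap k K (f (Finsupp.single i 1))
  have hF : ∀ h : ι →₀ k, F (Finsupp.mapRange (algebraMap k K) (map_zero _) h) =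
      algebraMap k K (f h) := by
    intro h
    induction h using Finsupp.induction_linear with
    | zero => simp
    | add a b ha hb =>
      rw [Finsupp.mapRange_add (map_add _), map_add, ha, hb, map_add, map_add]
    | single i c =>
      rw [Finsupp.mapRange_single, Finsupp.linearCombination_single, smul_eq_mul, ← map_mul,
        ← smul_eq_mul, ← map_smul, Finsupp.smul_single, smul_eq_mul, mul_one]
  have hFN : Submodule.span K (Finsupp.mapRange (algebraMap k K) (map_zero _) '' N) ≤
      LinearMap.ker F := by
    rw [Submodule.span_le]
    rintro _ ⟨n, hn, rfl⟩
    have : f n = 0 := by simpa [hfN] using Submodule.mem_map_of_mem (f := f) hn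
    simp [hF, this]
  exact hfg (by simpa [hF] using hFN hg)

theorem Submodule.exists_forall_le_of_rank_lt {K : Type*} {M : Type u} [DivisionRing K]
    [AddCommGroup M] [Module K M] {lam : Cardinal.{u}} (hreg : lam.IsRegular)
    (hM : Module.rank K M < lam) {W : Ordinal.{u} → Submodule K M} (hW : Monotone W) :
    ∃ α < lam.ord, ∀ β < lam.ord, W β ≤ W α := by
  obtain ⟨b, hb, hspan, hind⟩ := exists_linearIndependent K (⋃ β < lam.ord, (W β : Set M))
  have hbound : ∀ x : b, ∃ β < lam.ord, (x : M) ∈ W β := by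
    simpa using fun x : b => hb x.2
  choose f hf hxf using hbound
  have hb_card : #b < lam.ord.cof := by
    rw [hreg.cof_ord]; exact hind.cardinal_le_rank.trans_lt hM
  refine ⟨⨆ x, f x, Ordinal.iSup_lt_of_lt_cof hb_card hf, fun β hβ => ?_⟩
  calc W β ≤ Submodule.span K (⋃ β < lam.ord, (W β : Set M)) :=
        Submodule.subset_span.trans' (Set.subset_biUnion_of_mem (u := fun β => (W β : Set M)) hβ)
    _ = Submodule.span K b := hspan.symm
    _ ≤ W (⨆ x, f x) := Submodule.span_le.2 fun x hx =>
        hW (Ordinal.le_iSup f ⟨x, hx⟩) (hxf ⟨x, hx⟩)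

/-- The `k`-linear relations among the vectors `e i`, with scalars extended to the ambient field
`K`, so that relation spaces over different subfields of `K` live in one space. -/
noncomputable def relationSpace {K V ι : Type*} [Field K] (k : Subfield K) [AddCommGroup V]
    [Module k V] (e : ι → V) : Submodule K (ι →₀ K) :=
  Submodule.span K (Finsupp.mapRange (algebraMap k K) (map_zero _) ''
    LinearMap.ker (Finsupp.linearCombination k e))

section SemilinearTransition

variable {K V W ι : Type*} [Field K] {k l : Subfield K} [AddCommGroup V] [Module k V]
  [AddCommGroup W] [Module l W]

theorem linearCombination_mapRange_inclusion {hkl : k ≤ l} {f : V →+ W}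
    (hf : ∀ (a : k) (v : V), f (a • v) = Subfield.inclusion hkl a • f v)
    {e : ι → V} {e' : ι → W} (hfe : ∀ i, f (e i) = e' i) (g : ι →₀ k) :
    Finsupp.linearCombination l e' (Finsupp.mapRange (Subfield.inclusion hkl) (map_zero _) g) =
      f (Finsupp.linearCombination k e g) := by
  rw [Finsupp.linearCombination_apply, Finsupp.linearCombination_apply,
    Finsupp.sum_mapRange_index (by simp), map_finsuppSum]
  exact Finsupp.sum_congr fun i _ => by rw [hf, hfe]

theorem relationSpace_le_of_semilinear {hkl : k ≤ l} {f : V →+ W}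
    (hf : ∀ (a : k) (v : V), f (a • v) = Subfield.inclusion hkl a • f v)
    {e : ι → V} {e' : ι → W} (hfe : ∀ i, f (e i) = e' i) :
    relationSpace k e ≤ relationSpace l e' := by
  refine Submodule.span_mono ?_
  rintro _ ⟨g, hg, rfl⟩
  refine ⟨Finsupp.mapRange (Subfield.inclusion hkl) (map_zero _) g, ?_, by ext; rfl⟩
  simp_all [linearCombination_mapRange_inclusion hf hfe]

theorem injective_of_relationSpace_le {hkl : k ≤ l} {f : V →+ W}
    (hf : ∀ (a : k) (v : V), f (a • v) = Subfield.inclusion hkl a • f v)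
    {e : ι → V} {e' : ι → W} (hfe : ∀ i, f (e i) = e' i)
    (hspan : Submodule.span k (Set.range e) = ⊤)
    (hle : relationSpace l e' ≤ relationSpace k e) :
    Function.Injective f := by
  rw [injective_iff_map_eq_zero]
  intro v hv
  obtain ⟨g, rfl⟩ : ∃ g, Finsupp.linearCombination k e g = v :=
    LinearMap.range_eq_top.1 (by rw [Finsupp.range_linearCombination, hspan]) v
  have hg : Finsupp.mapRange (algebraMap k K) (map_zero _) g ∈ relationSpace l e' :=
    Submodule.subset_span ⟨Finsupp.mapRange (Subfield.inclusion hkl) (map_zero _) g,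
      by simp [linearCombination_mapRange_inclusion hf hfe, hv], by ext; rfl⟩
  exact Finsupp.mem_of_mapRange_algebraMap_mem_span _ (hle hg)

theorem span_range_comp_eq_top_of_semilinear {hkl : k ≤ l} {f : V →+ W}
    (hf : ∀ (a : k) (v : V), f (a • v) = Subfield.inclusion hkl a • f v)
    (hf_span : Submodule.span l (Set.range f) = ⊤) {e : ι → V}
    (he_span : Submodule.span k (Set.range e) = ⊤) :
    Submodule.span l (Set.range (f ∘ e)) = ⊤ := by
  rw [eq_top_iff, ← hf_span, Submodule.span_le]
  rintro _ ⟨v, rfl⟩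
  induction (he_span ▸ Submodule.mem_top : v ∈ Submodule.span k (Set.range e)) using
    Submodule.span_induction with
  | mem _ hx => obtain ⟨i, rfl⟩ := hx; exact Submodule.subset_span ⟨i, rfl⟩
  | zero => simp
  | add x y _ _ hx hy => rw [map_add]; exact add_mem hx hy
  | smul a x _ hx => rw [hf]; exact Submodule.smul_mem _ _ hx

end SemilinearTransition

theorem grounded_system_is_trim_general
    (K : Type) [Field K]
    (lam : Cardinal.{0}) (hreg : lam.IsRegular)
    (k : Ordinal.{0} → Subfield K)
    (hmono : ∀ {β γ : Ordinal.{0}}, β ≤ γ → k β ≤ k γ)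
    (V : Ordinal.{0} → Type) [∀ β, AddCommGroup (V β)] [∀ β, Module (k β) (V β)]
    (ν : ∀ β γ : Ordinal.{0}, β ≤ γ → (V β →+ V γ))
    (hcomp : ∀ (β γ δ : Ordinal.{0}) (h₁ : β ≤ γ) (h₂ : γ ≤ δ),
      (ν γ δ h₂).comp (ν β γ h₁) = ν β δ (h₁.trans h₂))
    (hsemi : ∀ (β γ : Ordinal.{0}) (h : β ≤ γ) (a : k β) (v : V β),
      ν β γ h (a • v) = (Subfield.inclusion (hmono h) a) • ν β γ h v)
    -- 0-groundedness: `V_β` is spanned over `k_β` by the image of `V_0`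
    (hground : ∀ (β : Ordinal.{0}), β < lam.ord →
      Submodule.span (k β) (Set.range (ν 0 β (zero_le (a := β)))) = ⊤)
    (hdim : Module.rank (k 0) (V 0) < lam) :
    ∃ α : Ordinal.{0}, α < lam.ord ∧
      ∀ (β γ : Ordinal.{0}) (h : β ≤ γ), α ≤ β → γ < lam.ord →
        Function.Injective (ν β γ h) := by
  let ι := Module.Basis.ofVectorSpaceIndex (k 0) (V 0)
  let b : Module.Basis ι (k 0) (V 0) := Module.Basis.ofVectorSpace (k 0) (V 0)
  let e : ∀ β, ι → V β := fun β => ν 0 β zero_le ∘ b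
  have he : ∀ β γ (h : β ≤ γ) i, ν β γ h (e β i) = e γ i := fun β γ h i =>
    DFunLike.congr_fun (hcomp 0 β γ zero_le h) (b i)
  have hrel_mono : Monotone fun β => relationSpace (k β) (e β) := fun β γ h =>
    relationSpace_le_of_semilinear (hsemi β γ h) (he β γ h)
  have hrank : Module.rank K (ι →₀ K) < lam := by
    rwa [rank_finsupp_self', b.mk_eq_rank'']
  obtain ⟨α, hα, hmax⟩ := Submodule.exists_forall_le_of_rank_lt hreg hrank hrel_mono
  refine ⟨α, hα, fun β γ h hαβ hγ => injective_of_relationSpace_le (hsemi β γ h) (he β γ h)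
    (span_range_comp_eq_top_of_semilinear (hsemi 0 β zero_le) (hground β (h.trans_lt hγ))
      b.span_eq) ((hmax γ hγ).trans (hrel_mono hαβ))⟩

/-- let `(k_β)_{β<λ}` be a chain of subfields of an ambient field `K`,
indexed by ordinals below a regular cardinal `λ`, with `k_β ⊆ k_γ` of infinite degree for
`β < γ`, and `(V_β, ν)` a 0-grounded system: each `V_β` a `k_β`-vector space, additive
transition maps `ν_{γβ}` that are `k_β`-semilinear (i.e. `k_β`-linear via the inclusion
`k_β ⊆ k_γ`), satisfying the cocycle condition, with `V_β = k_β · ν_{β0}(V_0)` for all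
`β < λ`.  If `dim_{k_0} V_0 < λ` then the system is trim: there is `α < λ` with `ν_{γβ}`
injective for all `α ≤ β ≤ γ < λ`. -/
theorem grounded_system_is_trim
    (K : Type) [Field K]
    (lam : Cardinal.{0}) (hreg : lam.IsRegular)
    (k : Ordinal.{0} → Subfield K)
    (hmono : ∀ {β γ : Ordinal.{0}}, β ≤ γ → k β ≤ k γ)
    -- the extensions `k β ⊆ k γ` have infinite degree for `β < γ < λ`:
    (hdeg : ∀ (β γ : Ordinal.{0}), β < γ → γ < lam.ord →
      ∀ n : ℕ, ∃ x : Fin n → K, (∀ i, x i ∈ k γ) ∧ LinearIndependent (k β) x)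
    (V : Ordinal.{0} → Type) [∀ β, AddCommGroup (V β)] [∀ β, Module (k β) (V β)]
    (ν : ∀ β γ : Ordinal.{0}, β ≤ γ → (V β →+ V γ))
    (hcomp : ∀ (β γ δ : Ordinal.{0}) (h₁ : β ≤ γ) (h₂ : γ ≤ δ),
      (ν γ δ h₂).comp (ν β γ h₁) = ν β δ (h₁.trans h₂))
    (hsemi : ∀ (β γ : Ordinal.{0}) (h : β ≤ γ) (a : k β) (v : V β),
      ν β γ h (a • v) = (Subfield.inclusion (hmono h) a) • ν β γ h v)
    -- 0-groundedness: `V_β` is spanned over `k_β` by the image of `V_0`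
    (hground : ∀ (β : Ordinal.{0}), β < lam.ord →
      Submodule.span (k β) (Set.range (ν 0 β (zero_le (a := β)))) = ⊤)
    (hdim : Module.rank (k 0) (V 0) < lam) :
    ∃ α : Ordinal.{0}, α < lam.ord ∧
      ∀ (β γ : Ordinal.{0}) (h : β ≤ γ), α ≤ β → γ < lam.ord →
        Function.Injective (ν β γ h) :=
  grounded_system_is_trim_general K lam hreg k hmono V ν hcomp hsemi hground hdim
end

section
/- Let C be an abelian category in which some object I has the property that every ordinal-indexed (indexed by ordinals below a regular cardinal λ) strictly ascending chain of subobjects of I stabilizes before λ. If (X_α)_{α<λ} is a chain of objects with essential monomorphisms X_α → X_β for α ≤ β that is strictly increasing (no X_α → X_β is an isomorphism for α < β), and if λ is regular and large enough, then X₀ does not embed into I when I is injective. -/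
open CategoryTheory Limits

/-!
Injectivity of `I` extends compatible embeddings `X_β ↪ I` (`β < α`) to an embedding
`X_α ↪ I`: the filtered colimit of the `X_β` embeds into both `X_α` and `I` by AB5, the map
into `X_α` is essential, and an extension of a mono along an essential mono is again a mono.
Starting from `X₀ ↪ I`, Zorn's lemma gives compatible embeddings `X_α ↪ I` for all `α < λ`.
Their images form a chain of subobjects of `I` that grows strictly at every successor step,
since no `X_α → X_{α+1}` is an isomorphism, so it cannot stabilize below the limit `λ`.
-/
namespace IsEssentialMono

variable {C : Type*} [Category C] {X Y Z : C}

lemma of_comp {a : X ⟶ Y} {t : Y ⟶ Z} (h : IsEssentialMono (a ≫ t)) [Mono t] :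
    IsEssentialMono t := by
  refine ⟨inferInstance, fun W g hg hW ↦ ?_⟩
  obtain ⟨V, u, v, hu, hV, huv⟩ := h.2 W g hg hW
  exact ⟨V, u, v ≫ a, hu, hV, by rw [huv, Category.assoc]⟩

lemma mono_of_mono_comp [Abelian C] {t : X ⟶ Y} {g : Y ⟶ Z} (ht : IsEssentialMono t)
    [Mono (t ≫ g)] : Mono g := by
  refine Abelian.mono_of_kernel_ι_eq_zero _ (by_contra fun hne ↦ ?_)
  obtain ⟨W, u, v, hu, hW, huv⟩ :=
    ht.2 _ (kernel.ι g) inferInstance fun hz ↦ hne (hz.eq_of_src _ _)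
  have hv : v = 0 := zero_of_comp_mono (t ≫ g) <| by
    rw [← Category.assoc, ← huv, Category.assoc, kernel.condition, comp_zero]
  exact hW (IsZero.of_mono_eq_zero (u ≫ kernel.ι g) (by rw [huv, hv, zero_comp]))

end IsEssentialMono

section ConnectedColimits

variable {C : Type*} [Category C] {J : Type*} [Category J] [IsConnected J]
  [HasColimitsOfShape J C] [(colim : (J ⥤ C) ⥤ C).PreservesMonomorphisms] {F : J ⥤ C}

lemma mono_colimit_desc (c : Cocone F) [∀ j, Mono (c.ι.app j)] : Mono (colimit.desc F c) :=
  have := NatTrans.mono_of_mono_app c.ι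
  colim.map_mono' c.ι (colimit.isColimit F) (isColimitConstCocone J c.pt) _
    fun j ↦ (colimit.ι_desc c j).trans (Category.comp_id _).symm

lemma exists_mono_extension_of_isEssentialMono [Abelian C] (c : Cocone F)
    (hc : ∀ j, IsEssentialMono (c.ι.app j)) (e : Cocone F) [Injective e.pt]
    [∀ j, Mono (e.ι.app j)] : ∃ g : c.pt ⟶ e.pt, Mono g ∧ ∀ j, c.ι.app j ≫ g = e.ι.app j := by
  have := fun j ↦ (hc j).1
  have := mono_colimit_desc c
  have := mono_colimit_desc e
  obtain ⟨g, hg⟩ := Injective.factors (colimit.desc F e) (colimit.desc F c)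
  obtain ⟨j₀⟩ := IsConnected.is_nonempty (J := J)
  have hess : IsEssentialMono (colimit.desc F c) :=
    IsEssentialMono.of_comp (a := colimit.ι F j₀) (by rw [colimit.ι_desc]; exact hc j₀)
  have : Mono (colimit.desc F c ≫ g) := by rw [hg]; infer_instance
  refine ⟨g, hess.mono_of_mono_comp, fun j ↦ ?_⟩
  rw [← colimit.ι_desc c j, Category.assoc, hg, colimit.ι_desc]

end ConnectedColimits

universe w

/-- Unlike `Ordinal.typein`, its top is `d` by definition. -/
noncomputable def Ordinal.toTypePrincipalSeg (d : Ordinal.{w}) : d.ToType <i Ordinal.{w} :=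
  PrincipalSeg.relIsoTrans Ordinal.ToType.mk.symm.toRelIsoLT (Set.principalSegIio d)

structure PartialEmbedding {C : Type*} [Category C] (F : Ordinal.{w} ⥤ C) (I : C)
    (o : Ordinal.{w}) where
  dom : Ordinal.{w}
  dom_le : dom ≤ o
  emb (β : Ordinal.{w}) : β < dom → (F.obj β ⟶ I)
  mono_emb (β : Ordinal.{w}) (hβ : β < dom) : Mono (emb β hβ)
  map_emb (β γ : Ordinal.{w}) (h : β ≤ γ) (hγ : γ < dom) :
    F.map (homOfLE h) ≫ emb γ hγ = emb β (h.trans_lt hγ)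

namespace PartialEmbedding

attribute [instance] mono_emb

section Order

variable {C : Type*} [Category C] {F : Ordinal.{w} ⥤ C} {I : C} {o : Ordinal.{w}}

instance : Preorder (PartialEmbedding F I o) where
  le p q := p.dom ≤ q.dom ∧ ∀ β (hp : β < p.dom) (hq : β < q.dom), q.emb β hq = p.emb β hp
  le_refl p := ⟨le_rfl, fun _ _ _ ↦ rfl⟩
  le_trans p q r hpq hqr := ⟨hpq.1.trans hqr.1,
    fun β hp hr ↦ (hqr.2 β (hp.trans_le hpq.1) hr).trans (hpq.2 β hp _)⟩

lemma emb_eq_of_isChain {c : Set (PartialEmbedding F I o)} (hc : IsChain (· ≤ ·) c)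
    {p q : PartialEmbedding F I o} (hp : p ∈ c) (hq : q ∈ c) (β : Ordinal.{w})
    (hβp : β < p.dom) (hβq : β < q.dom) : p.emb β hβp = q.emb β hβq := by
  rcases hc.total hp hq with h | h
  · exact (h.2 β hβp hβq).symm
  · exact h.2 β hβq hβp

lemma bddAbove_of_isChain (c : Set (PartialEmbedding F I o)) (hc : IsChain (· ≤ ·) c) :
    BddAbove c := by
  have hbdd : BddAbove (dom '' c) := ⟨o, by rintro _ ⟨p, -, rfl⟩; exact p.dom_le⟩
  have hcover (β : Ordinal.{w}) (hβ : β < sSup (dom '' c)) : ∃ p ∈ c, β < p.dom := by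
    obtain ⟨_, ⟨p, hp, rfl⟩, hβp⟩ := exists_lt_of_lt_csSup' hβ
    exact ⟨p, hp, hβp⟩
  choose pick pick_mem lt_pick_dom using hcover
  refine ⟨⟨sSup (dom '' c), csSup_le' fun _ ⟨p, _, hp⟩ ↦ hp ▸ p.dom_le,
      fun β hβ ↦ (pick β hβ).emb β (lt_pick_dom β hβ), fun _ _ ↦ inferInstance,
      fun β γ h hγ ↦ ?_⟩,
    fun p hp ↦ ⟨le_csSup hbdd ⟨p, hp, rfl⟩, fun β _ _ ↦ ?_⟩⟩
  · rw [map_emb]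
    exact emb_eq_of_isChain hc (pick_mem γ hγ) (pick_mem β _) _ _ _
  · exact emb_eq_of_isChain hc (pick_mem β _) hp _ _ _

/-- Outside the domain it takes the junk value `⊤`. -/
noncomputable def subobject (p : PartialEmbedding F I o) (α : Ordinal.{w}) : Subobject I :=
  if h : α < p.dom then Subobject.mk (p.emb α h) else ⊤

lemma subobject_le_subobject (p : PartialEmbedding F I o) {α β : Ordinal.{w}} (h : α ≤ β)
    (hβ : β < p.dom) : p.subobject α ≤ p.subobject β := by
  rw [subobject, subobject, dif_pos (h.trans_lt hβ), dif_pos hβ]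
  exact Subobject.mk_le_mk_of_comm _ (p.map_emb α β h hβ)

lemma subobject_lt_subobject (p : PartialEmbedding F I o) {α β : Ordinal.{w}} (h : α < β)
    (hβ : β < p.dom) (hF : ¬IsIso (F.map (homOfLE h.le))) : p.subobject α < p.subobject β := by
  rw [subobject, subobject, dif_pos (h.trans hβ), dif_pos hβ]
  exact Subobject.mk_lt_mk_of_comm _ (p.map_emb α β h.le hβ) hF

end Order

section Extension

variable {C : Type*} [Category C] [Abelian C] [HasColimitsOfSize.{w, w} C]
  [AB5OfSize.{w, w} C] {F : Ordinal.{w} ⥤ C} {I : C} [Injective I] {o : Ordinal.{w}}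

lemma exists_mono_extension (p : PartialEmbedding F I o)
    (hess : ∀ β (h : β ≤ p.dom), IsEssentialMono (F.map (homOfLE h)))
    (f : F.obj 0 ⟶ I) [Mono f] : ∃ g : F.obj p.dom ⟶ I,
      Mono g ∧ ∀ β (hβ : β < p.dom), F.map (homOfLE hβ.le) ≫ g = p.emb β hβ := by
  obtain h0 | hp := eq_or_ne p.dom 0
  · exact ⟨eqToHom (congrArg F.obj h0) ≫ f, inferInstance,
      fun β hβ ↦ absurd (h0 ▸ hβ) not_lt_zero⟩
  have : Nonempty p.dom.ToType := Ordinal.nonempty_toType_iff.2 hp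
  have := IsFiltered.isConnected p.dom.ToType
  let seg := p.dom.toTypePrincipalSeg
  let e : Cocone (seg.monotone.functor ⋙ F) :=
    { pt := I
      ι := { app j := p.emb (seg j) (seg.lt_top j)
             naturality j k φ := (p.map_emb _ _ _ _).trans (Category.comp_id _).symm } }
  have (j : p.dom.ToType) : Mono (e.ι.app j) := p.mono_emb _ _
  obtain ⟨g, hg, hcomm⟩ :=
    exists_mono_extension_of_isEssentialMono (seg.cocone F) (fun j ↦ hess _ _) e
  refine ⟨g, hg, fun β hβ ↦ ?_⟩
  obtain ⟨j, rfl⟩ := seg.mem_range_of_rel_top hβ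
  exact hcomm j

lemma exists_lt_of_dom_lt (p : PartialEmbedding F I o) (hp : p.dom < o)
    (hess : ∀ α β (h : α ≤ β), β < o → IsEssentialMono (F.map (homOfLE h)))
    (f : F.obj 0 ⟶ I) [Mono f] : ∃ q, p < q := by
  obtain ⟨g, hg, hgp⟩ := p.exists_mono_extension (fun β h ↦ hess β p.dom h hp) f
  have (β : Ordinal.{w}) (h : β ≤ p.dom) : Mono (F.map (homOfLE h)) := (hess β p.dom h hp).1
  let q : PartialEmbedding F I o :=
    { dom := Order.succ p.dom
      dom_le := Order.succ_le_of_lt hp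
      emb β hβ := F.map (homOfLE (Order.lt_succ_iff.1 hβ)) ≫ g
      mono_emb β hβ := inferInstance
      map_emb β γ h hγ := by rw [← Category.assoc, ← F.map_comp]; rfl }
  exact ⟨q, lt_of_le_not_ge ⟨(Order.lt_succ p.dom).le, fun β hβ _ ↦ hgp β hβ⟩
    fun hqp ↦ (Order.lt_succ p.dom).not_ge hqp.1⟩

lemma exists_dom_eq
    (hess : ∀ α β (h : α ≤ β), β < o → IsEssentialMono (F.map (homOfLE h)))
    (f : F.obj 0 ⟶ I) [Mono f] : ∃ p : PartialEmbedding F I o, p.dom = o := by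
  obtain ⟨p, hp⟩ := zorn_le (α := PartialEmbedding F I o) bddAbove_of_isChain
  refine ⟨p, p.dom_le.eq_of_not_lt fun hlt ↦ ?_⟩
  obtain ⟨q, hq⟩ := p.exists_lt_of_dom_lt hlt hess f
  exact hp.not_lt hq

end Extension

end PartialEmbedding

/-- let `C` be a cocomplete (AB5) abelian category, `λ` a regular cardinal,
and `I` an object of `C` all of whose `< λ`-indexed ascending chains of subobjects
stabilize before `λ`.  If `(X_α)_{α<λ}` is a chain with essential monomorphisms
`X_α → X_β` (`α ≤ β`), none of which is an isomorphism for `α < β`, and `I` is injective,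
then `X₀ does not embed into `I`. -/
theorem base_of_long_essential_chain_does_not_embed
    {C : Type*} [Category C] [Abelian C] [HasColimits C] [AB5 C]
    (lam : Cardinal.{0}) (hreg : lam.IsRegular)
    (I : C)
    (hstab : ∀ s : Ordinal.{0} → Subobject I,
      (∀ α β : Ordinal.{0}, α ≤ β → β < lam.ord → s α ≤ s β) →
      ∃ α, α < lam.ord ∧ ∀ β, α ≤ β → β < lam.ord → s β = s α)
    (X : Ordinal.{0} → C) (m : ∀ α β : Ordinal.{0}, α ≤ β → (X α ⟶ X β))
    (hid : ∀ α, m α α le_rfl = 𝟙 (X α))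
    (hcomp : ∀ (α β γ : Ordinal.{0}) (h₁ : α ≤ β) (h₂ : β ≤ γ),
      m α β h₁ ≫ m β γ h₂ = m α γ (h₁.trans h₂))
    (hess : ∀ (α β : Ordinal.{0}) (h : α ≤ β), β < lam.ord → IsEssentialMono (m α β h))
    (hstrict : ∀ (α β : Ordinal.{0}) (h : α < β), β < lam.ord → ¬ IsIso (m α β h.le))
    (hI : Injective I) :
    ¬ ∃ f : X 0 ⟶ I, Mono f := by
  rintro ⟨f, hf⟩
  let F : Ordinal.{0} ⥤ C :=
    { obj := X
      map φ := m _ _ (leOfHom φ)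
      map_id α := hid α
      map_comp φ ψ := (hcomp _ _ _ _ _).symm }
  have := AB5OfSize_shrink.{0, 0} C
  obtain ⟨p, hp⟩ := PartialEmbedding.exists_dom_eq (F := F) (I := I) hess f
  obtain ⟨α, hα, hstable⟩ :=
    hstab p.subobject fun α β h hβ ↦ p.subobject_le_subobject h (hβ.trans_eq hp.symm)
  have hsucc : Order.succ α < lam.ord := (Cardinal.isSuccLimit_ord hreg.aleph0_le).succ_lt hα
  have hlt : p.subobject α < p.subobject (Order.succ α) :=
    p.subobject_lt_subobject (Order.lt_succ α) (hsucc.trans_eq hp.symm)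
      (hstrict α _ (Order.lt_succ α) hsucc)
  exact hlt.ne' (hstable _ (Order.le_succ α) hsucc)
end
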